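/- arXiv:0810.1425 — 2 statements merged into one kernel-verified Lean document; each statement's English description precedes it below -/
import Mathlib

section
/- Let d be a positive integer and a a positive integer. The critical values for coherent systems of type (2+ad, d, 1), i.e. the values α = (n₁d − d₁(2+ad))/(2+ad−n₁) with positive integers n₁, d₁ satisfying 0 < n₁ < 2+ad, 0 < d₁ < d, d₁/n₁ < (d−d₁)/(2+ad−n₁) and 0 < α < d/(1+ad), are exactly the numbers α_i = (d−2d₁)/(1+a(d−d₁)) where d₁ = ⌊(d−1)/2⌋ − i + 1 for integers 0 < i ≤ ⌊(d−1)/2⌋. -/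
/-!
Write `N = 2 + a d` and `n₂ = N - n₁`. The slope condition `d₁/n₁ < (d - d₁)/n₂` and `0 < α` both
say `d₁ N < n₁ d`, i.e. `2 d₁ < (n₁ - a d₁) d`. Clearing denominators in `α < d/(N - 1)` leaves a
common factor `N`, and what remains is `(n₁ - a d₁ - 1) d < d₁`. Together the two give `d₁ < d`,
so integrality of `n₁ - a d₁` forces `n₁ = a d₁ + 1` and `2 d₁ < d`, and then
`α = (d - 2 d₁)/(1 + a (d - d₁))`.
-/

theorem exists_reflect_iff (m : ℕ) (P : ℕ → Prop) :
    (∃ i, 0 < i ∧ i ≤ m ∧ P (m - i + 1)) ↔ ∃ j, 0 < j ∧ j ≤ m ∧ P j := by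
  constructor
  · rintro ⟨i, hi, him, hP⟩
    exact ⟨m - i + 1, by omega, by omega, hP⟩
  · rintro ⟨j, hj, hjm, hP⟩
    exact ⟨m - j + 1, by omega, by omega, by rwa [show m - (m - j + 1) + 1 = j by omega]⟩

section OrderedField

variable {K : Type*} [Field K] [LinearOrder K] [IsStrictOrderedRing K] {N c n₁ d d₁ : K}

theorem div_lt_sub_div_sub_iff (hn₁ : 0 < n₁) (hn : n₁ < N) :
    d₁ / n₁ < (d - d₁) / (N - n₁) ↔ d₁ * N < n₁ * d := by
  rw [div_lt_div_iff₀ hn₁ (sub_pos.2 hn)]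
  constructor <;> intro h <;> linarith

theorem critical_pos_iff (hn : n₁ < N) :
    0 < (n₁ * d - d₁ * N) / (N - n₁) ↔ d₁ * N < n₁ * d := by
  rw [div_pos_iff_of_pos_right (sub_pos.2 hn), sub_pos]

theorem critical_lt_iff (hn : n₁ < N) (hc : 0 < c) (hN : N = c + 1) :
    (n₁ * d - d₁ * N) / (N - n₁) < d / c ↔ n₁ * d < d + d₁ * c := by
  subst hN
  have key : (n₁ * d - d₁ * (c + 1)) * c - d * (c + 1 - n₁) =
      (c + 1) * (n₁ * d) - (c + 1) * (d + d₁ * c) := by ring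
  rw [div_lt_div_iff₀ (sub_pos.2 hn) hc, ← sub_neg, key, sub_neg,
    mul_lt_mul_iff_right₀ (by positivity)]

end OrderedField

theorem critical_ineqs_iff {a d n₁ d₁ : ℕ} (hd₁ : 0 < d₁) :
    d₁ * (2 + a * d) < n₁ * d ∧ n₁ * d < d + d₁ * (1 + a * d) ↔ n₁ = a * d₁ + 1 ∧ 2 * d₁ < d := by
  constructor
  · rintro ⟨hpos, hlt⟩
    have hn₁ : n₁ = a * d₁ + 1 := by
      rcases lt_trichotomy n₁ (a * d₁ + 1) with h | h | h
      · nlinarith [Nat.mul_le_mul_right d (Nat.lt_succ_iff.1 h)]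
      · exact h
      · nlinarith [Nat.mul_le_mul_right d (Nat.succ_le_of_lt h)]
    subst hn₁
    exact ⟨rfl, by nlinarith⟩
  · rintro ⟨rfl, h⟩
    constructor <;> nlinarith

theorem critical_conditions_iff {a d n₁ d₁ : ℕ} (hn₁ : 0 < n₁) (hn : n₁ < 2 + a * d)
    (hd₁ : 0 < d₁) :
    ((d₁ : ℚ) / n₁ < ((d : ℚ) - d₁) / ((2 + a * d - n₁ : ℕ) : ℚ) ∧
      0 < ((n₁ : ℚ) * d - d₁ * (2 + (a : ℚ) * d)) / ((2 + (a : ℚ) * d) - n₁) ∧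
      ((n₁ : ℚ) * d - d₁ * (2 + (a : ℚ) * d)) / ((2 + (a : ℚ) * d) - n₁) < (d : ℚ) / (1 + a * d)) ↔
      n₁ = a * d₁ + 1 ∧ 2 * d₁ < d := by
  have hN : (n₁ : ℚ) < 2 + a * d := by exact_mod_cast hn
  push_cast [Nat.cast_sub hn.le]
  rw [div_lt_sub_div_sub_iff (by exact_mod_cast hn₁) hN, critical_pos_iff hN,
    critical_lt_iff hN (by positivity) (by ring), and_self_left]
  exact_mod_cast critical_ineqs_iff hd₁

theorem critical_values_general (a d : ℕ) (α : ℚ) :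
    (∃ n₁ d₁ : ℕ, 0 < n₁ ∧ n₁ < 2 + a * d ∧ 0 < d₁ ∧ d₁ < d ∧
      (d₁ : ℚ) / (n₁ : ℚ) < ((d : ℚ) - (d₁ : ℚ)) / ((2 + a * d - n₁ : ℕ) : ℚ) ∧
      α = ((n₁ : ℚ) * (d : ℚ) - (d₁ : ℚ) * (2 + (a : ℚ) * d)) / ((2 + (a : ℚ) * d) - n₁) ∧
      0 < α ∧ α < (d : ℚ) / (1 + (a : ℚ) * d)) ↔
    (∃ i : ℕ, 0 < i ∧ i ≤ (d - 1) / 2 ∧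
      α = ((d : ℚ) - 2 * (((d - 1) / 2 - i + 1 : ℕ) : ℚ)) /
            (1 + (a : ℚ) * ((d : ℚ) - (((d - 1) / 2 - i + 1 : ℕ) : ℚ)))) := by
  refine Iff.trans ?_ (exists_reflect_iff ((d - 1) / 2)
    fun d₁ : ℕ => α = ((d : ℚ) - 2 * d₁) / (1 + a * ((d : ℚ) - d₁))).symm
  constructor
  · rintro ⟨n₁, d₁, hn₁, hn, hd₁, -, hslope, rfl, hpos, hlt⟩
    obtain ⟨rfl, h2d₁⟩ := (critical_conditions_iff hn₁ hn hd₁).1 ⟨hslope, hpos, hlt⟩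
    exact ⟨d₁, hd₁, by omega, by push_cast; ring⟩
  · rintro ⟨d₁, hd₁, hd₁m, hα⟩
    have h2d₁ : 2 * d₁ < d := by omega
    have hn : a * d₁ + 1 < 2 + a * d := by nlinarith
    obtain ⟨hslope, hpos, hlt⟩ :=
      (critical_conditions_iff (n₁ := a * d₁ + 1) (by positivity) hn hd₁).2 ⟨rfl, h2d₁⟩
    have hα' : α = (((a * d₁ + 1 : ℕ) : ℚ) * d - d₁ * (2 + (a : ℚ) * d)) /
        ((2 + (a : ℚ) * d) - ((a * d₁ + 1 : ℕ) : ℚ)) := by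
      rw [hα]; push_cast; ring
    exact ⟨a * d₁ + 1, d₁, by omega, hn, hd₁, by omega, hslope, hα', by rwa [hα'], by rwa [hα']⟩

/-- The critical values for coherent systems of type `(2+ad, d, 1)` are exactly the
numbers `α_i = (d - 2d₁)/(1 + a(d - d₁))` with `d₁ = ⌊(d-1)/2⌋ - i + 1`, `0 < i ≤ ⌊(d-1)/2⌋`. -/
theorem critical_values (a d : ℕ) (ha : 0 < a) (hd : 0 < d) (α : ℚ) :
    (∃ n₁ d₁ : ℕ, 0 < n₁ ∧ n₁ < 2 + a * d ∧ 0 < d₁ ∧ d₁ < d ∧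
      (d₁ : ℚ) / (n₁ : ℚ) < ((d : ℚ) - (d₁ : ℚ)) / ((2 + a * d - n₁ : ℕ) : ℚ) ∧
      α = ((n₁ : ℚ) * (d : ℚ) - (d₁ : ℚ) * (2 + (a : ℚ) * d)) / ((2 + (a : ℚ) * d) - n₁) ∧
      0 < α ∧ α < (d : ℚ) / (1 + (a : ℚ) * d)) ↔
    (∃ i : ℕ, 0 < i ∧ i ≤ (d - 1) / 2 ∧
      α = ((d : ℚ) - 2 * (((d - 1) / 2 - i + 1 : ℕ) : ℚ)) /
            (1 + (a : ℚ) * ((d : ℚ) - (((d - 1) / 2 - i + 1 : ℕ) : ℚ)))) :=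
  critical_values_general a d α
end

section
/- Let d ≥ 2 be even. In ℚ[u,v], the polynomial (1+u)(1+v)(1−(uv)^{d/2})·[(u+v)(uv−(uv)^{d/2}) + (1+uv)(1−(uv)^{d/2+1})] is divisible by (1−uv)²(1+uv), i.e. ε_{G₀(n,d,1)} as given in Theorem 5.9(a) is a genuine polynomial in u, v. -/
open MvPolynomial

private lemma one_sub_dvd {R : Type*} [CommRing R] (t : R) (n : ℕ) :
    (1 - t) ∣ 1 - t ^ n := by
  simpa using sub_dvd_pow_sub_pow (1 : R) t n

private lemma one_sub_sq_dvd {R : Type*} [CommRing R] (t : R) (k : ℕ) :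
    (1 - t) * (1 + t) ∣ 1 - t ^ (2 * k) := by
  have h := sub_dvd_pow_sub_pow (1 : R) (t ^ 2) k
  rw [one_pow, ← pow_mul] at h
  have e : (1 - t) * (1 + t) = 1 - t ^ 2 := by ring
  rw [e]; exact h

private lemma key {R : Type*} [CommRing R] (u v t : R) (m : ℕ) :
    (1 - t) ^ 2 * (1 + t) ∣
      (1 + u) * (1 + v) * (1 - t ^ m) *
        ((u + v) * (t - t ^ m) + (1 + t) * (1 - t ^ (m + 1))) := by
  rcases Nat.even_or_odd m with ⟨k, hk⟩ | ⟨k, hk⟩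
  · -- m = 2k
    subst hk
    obtain ⟨a, ha⟩ := one_sub_sq_dvd t k
    rw [two_mul] at ha
    have hb : (1 - t) ∣ (u + v) * (t - t ^ (k + k)) + (1 + t) * (1 - t ^ (k + k + 1)) := by
      refine dvd_add (Dvd.dvd.mul_left ?_ _) (Dvd.dvd.mul_left (one_sub_dvd t _) _)
      have e : t - t ^ (k + k) = (1 - t ^ (k + k)) - (1 - t) := by ring
      rw [e]; exact (one_sub_dvd t _).sub dvd_rfl
    obtain ⟨b, hb⟩ := hb
    exact ⟨(1 + u) * (1 + v) * a * b, by rw [hb, ha]; ring⟩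
  · -- m = 2k+1
    subst hk
    obtain ⟨a, ha⟩ := one_sub_dvd t (2 * k + 1)
    obtain ⟨b, hb⟩ := one_sub_sq_dvd t k
    obtain ⟨c, hc⟩ := one_sub_sq_dvd t (k + 1)
    have e1 : t - t ^ (2 * k + 1) = t * (1 - t ^ (2 * k)) := by ring
    have e2 : 2 * k + 1 + 1 = 2 * (k + 1) := by ring
    refine ⟨(1 + u) * (1 + v) * a * ((u + v) * (t * b) + (1 + t) * c), ?_⟩
    rw [e1, e2, ha, hb, hc]; ring

/-- In `ℚ[u,v]` the numerator of `ε_{G₀(n,d,1)}` is divisible by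
`(1-uv)²(1+uv)`, so `ε_{G₀(n,d,1)}` is a genuine polynomial. -/
theorem hodge_poly_divisibility (d : ℕ) (hd : 2 ≤ d) (hev : Even d) :
    ((1 - X 0 * X 1)^2 * (1 + X 0 * X 1) : MvPolynomial (Fin 2) ℚ) ∣
      (1 + X 0) * (1 + X 1) * (1 - (X 0 * X 1)^(d/2)) *
        ((X 0 + X 1) * (X 0 * X 1 - (X 0 * X 1)^(d/2))
          + (1 + X 0 * X 1) * (1 - (X 0 * X 1)^(d/2 + 1))) := by
  exact key (X 0) (X 1) (X 0 * X 1) (d / 2)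
end
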